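/- No 3-path-configuration (3PC) has a Hamiltonian cycle. -/

import Mathlib

open SimpleGraph

universe u

variable {V : Type u}

/-- A graph is 2-connected if it has at least three vertices, is connected,
and deleting any single vertex leaves a connected graph. -/
def TwoConnected (G : SimpleGraph V) : Prop :=
  3 ≤ Nat.card V ∧ G.Connected ∧ ∀ v : V, (G.induce ({v}ᶜ : Set V)).Connected

/-- A graph is Hamiltonian if it has a Hamiltonian cycle. -/
def IsHamiltonianGraph (G : SimpleGraph V) : Prop :=
  ∃ (a : V) (p : G.Walk a a), p.IsCycle ∧ ∀ x : V, x ∈ p.support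

/-- An HC-obstruction: 2-connected, non-Hamiltonian, and every proper induced
subgraph is not 2-connected or Hamiltonian. -/
def IsHCObstruction (G : SimpleGraph V) : Prop :=
  TwoConnected G ∧ ¬ IsHamiltonianGraph G ∧
    ∀ X : Set V, X ≠ Set.univ →
      ¬ TwoConnected (G.induce X) ∨ IsHamiltonianGraph (G.induce X)

/-- A theta: the union of three internally vertex-disjoint paths of length at
least two between two distinct vertices `a`, `b`, with no other edges. -/
def IsTheta (G : SimpleGraph V) : Prop :=
  ∃ (a b : V) (P₁ P₂ P₃ : G.Walk a b),
    a ≠ b ∧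
    P₁.IsPath ∧ P₂.IsPath ∧ P₃.IsPath ∧
    2 ≤ P₁.length ∧ 2 ≤ P₂.length ∧ 2 ≤ P₃.length ∧
    (∀ x, x ∈ P₁.support → x ∈ P₂.support → x = a ∨ x = b) ∧
    (∀ x, x ∈ P₁.support → x ∈ P₃.support → x = a ∨ x = b) ∧
    (∀ x, x ∈ P₂.support → x ∈ P₃.support → x = a ∨ x = b) ∧
    (∀ x : V, x ∈ P₁.support ∨ x ∈ P₂.support ∨ x ∈ P₃.support) ∧
    (∀ e, e ∈ G.edgeSet → e ∈ P₁.edges ∨ e ∈ P₂.edges ∨ e ∈ P₃.edges)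

/-- A theta⁺: a theta together with the edge joining its two endpoints. -/
def IsThetaPlus (G : SimpleGraph V) : Prop :=
  ∃ (a b : V) (P₁ P₂ P₃ : G.Walk a b),
    a ≠ b ∧ G.Adj a b ∧
    P₁.IsPath ∧ P₂.IsPath ∧ P₃.IsPath ∧
    2 ≤ P₁.length ∧ 2 ≤ P₂.length ∧ 2 ≤ P₃.length ∧
    (∀ x, x ∈ P₁.support → x ∈ P₂.support → x = a ∨ x = b) ∧
    (∀ x, x ∈ P₁.support → x ∈ P₃.support → x = a ∨ x = b) ∧
    (∀ x, x ∈ P₂.support → x ∈ P₃.support → x = a ∨ x = b) ∧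
    (∀ x : V, x ∈ P₁.support ∨ x ∈ P₂.support ∨ x ∈ P₃.support) ∧
    (∀ e, e ∈ G.edgeSet →
      e = s(a, b) ∨ e ∈ P₁.edges ∨ e ∈ P₂.edges ∨ e ∈ P₃.edges)

/-- A prism: two vertex-disjoint triangles joined by three pairwise
vertex-disjoint paths of length at least two, with no other edges. -/
def IsPrism (G : SimpleGraph V) : Prop :=
  ∃ (k₁ k₂ k₃ l₁ l₂ l₃ : V) (P₁ : G.Walk k₁ l₁) (P₂ : G.Walk k₂ l₂) (P₃ : G.Walk k₃ l₃),
    G.Adj k₁ k₂ ∧ G.Adj k₂ k₃ ∧ G.Adj k₁ k₃ ∧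
    G.Adj l₁ l₂ ∧ G.Adj l₂ l₃ ∧ G.Adj l₁ l₃ ∧
    P₁.IsPath ∧ P₂.IsPath ∧ P₃.IsPath ∧
    2 ≤ P₁.length ∧ 2 ≤ P₂.length ∧ 2 ≤ P₃.length ∧
    (∀ x, x ∈ P₁.support → x ∉ P₂.support) ∧
    (∀ x, x ∈ P₁.support → x ∉ P₃.support) ∧
    (∀ x, x ∈ P₂.support → x ∉ P₃.support) ∧
    (∀ x : V, x ∈ P₁.support ∨ x ∈ P₂.support ∨ x ∈ P₃.support) ∧
    (∀ e, e ∈ G.edgeSet →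
      e = s(k₁, k₂) ∨ e = s(k₂, k₃) ∨ e = s(k₁, k₃) ∨
      e = s(l₁, l₂) ∨ e = s(l₂, l₃) ∨ e = s(l₁, l₃) ∨
      e ∈ P₁.edges ∨ e ∈ P₂.edges ∨ e ∈ P₃.edges)

/-- A prism⁺: a prism together with, for each index in a nonempty subset of
`{1,2,3}`, the edge joining the ends `kᵢ`, `lᵢ` of the corresponding path. -/
def IsPrismPlus (G : SimpleGraph V) : Prop :=
  ∃ (k₁ k₂ k₃ l₁ l₂ l₃ : V) (P₁ : G.Walk k₁ l₁) (P₂ : G.Walk k₂ l₂) (P₃ : G.Walk k₃ l₃)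
    (b₁ b₂ b₃ : Prop),
    (b₁ ∨ b₂ ∨ b₃) ∧
    (b₁ → G.Adj k₁ l₁) ∧ (b₂ → G.Adj k₂ l₂) ∧ (b₃ → G.Adj k₃ l₃) ∧
    G.Adj k₁ k₂ ∧ G.Adj k₂ k₃ ∧ G.Adj k₁ k₃ ∧
    G.Adj l₁ l₂ ∧ G.Adj l₂ l₃ ∧ G.Adj l₁ l₃ ∧
    P₁.IsPath ∧ P₂.IsPath ∧ P₃.IsPath ∧
    2 ≤ P₁.length ∧ 2 ≤ P₂.length ∧ 2 ≤ P₃.length ∧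
    (∀ x, x ∈ P₁.support → x ∉ P₂.support) ∧
    (∀ x, x ∈ P₁.support → x ∉ P₃.support) ∧
    (∀ x, x ∈ P₂.support → x ∉ P₃.support) ∧
    (∀ x : V, x ∈ P₁.support ∨ x ∈ P₂.support ∨ x ∈ P₃.support) ∧
    (∀ e, e ∈ G.edgeSet →
      e = s(k₁, k₂) ∨ e = s(k₂, k₃) ∨ e = s(k₁, k₃) ∨
      e = s(l₁, l₂) ∨ e = s(l₂, l₃) ∨ e = s(l₁, l₃) ∨
      (b₁ ∧ e = s(k₁, l₁)) ∨ (b₂ ∧ e = s(k₂, l₂)) ∨ (b₃ ∧ e = s(k₃, l₃)) ∨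
      e ∈ P₁.edges ∨ e ∈ P₂.edges ∨ e ∈ P₃.edges)

/-- A pyramid: a triangle `{k₁,k₂,k₃}` and an apex `l`, joined by three
internally vertex-disjoint paths of length at least two, with no other edges. -/
def IsPyramid (G : SimpleGraph V) : Prop :=
  ∃ (k₁ k₂ k₃ l : V) (P₁ : G.Walk k₁ l) (P₂ : G.Walk k₂ l) (P₃ : G.Walk k₃ l),
    G.Adj k₁ k₂ ∧ G.Adj k₂ k₃ ∧ G.Adj k₁ k₃ ∧
    P₁.IsPath ∧ P₂.IsPath ∧ P₃.IsPath ∧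
    2 ≤ P₁.length ∧ 2 ≤ P₂.length ∧ 2 ≤ P₃.length ∧
    (∀ x, x ∈ P₁.support → x ∈ P₂.support → x = l) ∧
    (∀ x, x ∈ P₁.support → x ∈ P₃.support → x = l) ∧
    (∀ x, x ∈ P₂.support → x ∈ P₃.support → x = l) ∧
    (∀ x : V, x ∈ P₁.support ∨ x ∈ P₂.support ∨ x ∈ P₃.support) ∧
    (∀ e, e ∈ G.edgeSet →
      e = s(k₁, k₂) ∨ e = s(k₂, k₃) ∨ e = s(k₁, k₃) ∨
      e ∈ P₁.edges ∨ e ∈ P₂.edges ∨ e ∈ P₃.edges)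

/-- A pyramid⁺: a pyramid together with, for each index in a nonempty subset of
`{1,2,3}`, the edge joining the ends `kᵢ`, `l` of the corresponding path. -/
def IsPyramidPlus (G : SimpleGraph V) : Prop :=
  ∃ (k₁ k₂ k₃ l : V) (P₁ : G.Walk k₁ l) (P₂ : G.Walk k₂ l) (P₃ : G.Walk k₃ l)
    (b₁ b₂ b₃ : Prop),
    (b₁ ∨ b₂ ∨ b₃) ∧
    (b₁ → G.Adj k₁ l) ∧ (b₂ → G.Adj k₂ l) ∧ (b₃ → G.Adj k₃ l) ∧
    G.Adj k₁ k₂ ∧ G.Adj k₂ k₃ ∧ G.Adj k₁ k₃ ∧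
    P₁.IsPath ∧ P₂.IsPath ∧ P₃.IsPath ∧
    2 ≤ P₁.length ∧ 2 ≤ P₂.length ∧ 2 ≤ P₃.length ∧
    (∀ x, x ∈ P₁.support → x ∈ P₂.support → x = l) ∧
    (∀ x, x ∈ P₁.support → x ∈ P₃.support → x = l) ∧
    (∀ x, x ∈ P₂.support → x ∈ P₃.support → x = l) ∧
    (∀ x : V, x ∈ P₁.support ∨ x ∈ P₂.support ∨ x ∈ P₃.support) ∧
    (∀ e, e ∈ G.edgeSet →
      e = s(k₁, k₂) ∨ e = s(k₂, k₃) ∨ e = s(k₁, k₃) ∨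
      (b₁ ∧ e = s(k₁, l)) ∨ (b₂ ∧ e = s(k₂, l)) ∨ (b₃ ∧ e = s(k₃, l)) ∨
      e ∈ P₁.edges ∨ e ∈ P₂.edges ∨ e ∈ P₃.edges)

/-- A 3-path-configuration: a prism, a pyramid, a theta, a prism⁺, a
pyramid⁺, or a theta⁺. -/
def IsThreePathConfig (G : SimpleGraph V) : Prop :=
  IsPrism G ∨ IsPyramid G ∨ IsTheta G ∨ IsPrismPlus G ∨ IsPyramidPlus G ∨ IsThetaPlus G

/-- A wheel: a cycle together with one extra vertex having at least three
neighbors on the cycle, and no other edges. -/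
def IsWheel (G : SimpleGraph V) : Prop :=
  ∃ (c u : V) (w : G.Walk u u), w.IsCycle ∧ c ∉ w.support ∧
    (∀ x : V, x = c ∨ x ∈ w.support) ∧
    3 ≤ {x | x ∈ w.support ∧ G.Adj c x}.ncard ∧
    (∀ e, e ∈ G.edgeSet → e ∈ w.edges ∨ ∃ x ∈ w.support, e = s(c, x))

/-- A graph is wheel-free if no induced subgraph is a wheel. -/
def WheelFree (G : SimpleGraph V) : Prop :=
  ∀ X : Set V, ¬ IsWheel (G.induce X)

/-- A set of vertices is a cutset if deleting it leaves a disconnected graph. -/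
def IsCutset (G : SimpleGraph V) (X : Set V) : Prop :=
  ¬ (G.induce (Xᶜ : Set V)).Preconnected

section ThreePCHelpers

variable {G : SimpleGraph V}

private lemma path_start_ne_end {u w : V} {p : G.Walk u w} (hp : p.IsPath) (hn : ¬ p.Nil) :
    u ≠ w := by
  cases p with
  | nil => exact absurd Walk.nil_nil hn
  | cons h q =>
    rintro rfl
    exact ((Walk.cons_isPath_iff _ _).mp hp).2 q.end_mem_support

private lemma start_edge_unique {u w : V} {p : G.Walk u w} (hp : p.IsPath) {z z' : V}
    (hz : s(u, z) ∈ p.edges) (hz' : s(u, z') ∈ p.edges) : z = z' := by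
  cases p with
  | nil => simp at hz
  | @cons _ b _ h q =>
    rw [Walk.edges_cons, List.mem_cons] at hz hz'
    have hp' := (Walk.cons_isPath_iff _ _).mp hp
    have key : ∀ y : V, s(u, y) = s(u, b) ∨ s(u, y) ∈ q.edges → y = b := by
      rintro y (hy | hy)
      · rcases Sym2.eq_iff.mp hy with ⟨-, rfl⟩ | ⟨rfl, -⟩
        · rfl
        · exact absurd rfl h.ne
      · exact absurd (q.fst_mem_support_of_mem_edges hy) hp'.2
    exact (key z hz).trans (key z' hz').symm

private lemma end_edge_unique {u w : V} {p : G.Walk u w} (hp : p.IsPath) {z z' : V}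
    (hz : s(w, z) ∈ p.edges) (hz' : s(w, z') ∈ p.edges) : z = z' := by
  refine start_edge_unique hp.reverse ?_ ?_ <;>
    rw [Walk.edges_reverse, List.mem_reverse] <;> assumption

private lemma path_no_three {v z₁ z₂ z₃ : V} (h12 : z₁ ≠ z₂) (h13 : z₁ ≠ z₃) (h23 : z₂ ≠ z₃)
    {u w : V} (p : G.Walk u w) :
    p.IsPath → s(v, z₁) ∈ p.edges → s(v, z₂) ∈ p.edges → s(v, z₃) ∈ p.edges → False := by
  induction p with
  | nil => intro _ h1 _ _; simp at h1
  | @cons a b c h q ih =>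
    intro hp h1 h2 h3
    by_cases hva : v = a
    · subst hva
      exact h12 (start_edge_unique hp h1 h2)
    have hq : q.IsPath := hp.of_cons
    rw [Walk.edges_cons, List.mem_cons] at h1 h2 h3
    have cl : ∀ z : V, s(v, z) = s(a, b) ∨ s(v, z) ∈ q.edges →
        (v = b ∧ z = a) ∨ s(v, z) ∈ q.edges := by
      rintro z (hz | hz)
      · rcases Sym2.eq_iff.mp hz with ⟨hv, -⟩ | ⟨hv, hz'⟩
        · exact absurd hv hva
        · exact Or.inl ⟨hv, hz'⟩
      · exact Or.inr hz
    rcases cl _ h1 with ⟨hvb, e1⟩ | m1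
    · rcases cl _ h2 with ⟨-, e2⟩ | m2
      · exact h12 (e1.trans e2.symm)
      rcases cl _ h3 with ⟨-, e3⟩ | m3
      · exact h13 (e1.trans e3.symm)
      · subst hvb; exact h23 (start_edge_unique hq m2 m3)
    · rcases cl _ h2 with ⟨hvb, e2⟩ | m2
      · rcases cl _ h3 with ⟨-, e3⟩ | m3
        · exact h23 (e2.trans e3.symm)
        · subst hvb; exact h13 (start_edge_unique hq m1 m3)
      · rcases cl _ h3 with ⟨hvb, -⟩ | m3
        · subst hvb; exact h12 (start_edge_unique hq m1 m2)
        · exact ih hq m1 m2 m3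

private lemma cycle_start_pair {v : V} {C : G.Walk v v} (hC : C.IsCycle) :
    ∃ x y : V, x ≠ y ∧ s(v, x) ∈ C.edges ∧ s(v, y) ∈ C.edges ∧
      ∀ z, s(v, z) ∈ C.edges → z = x ∨ z = y := by
  cases C with
  | nil => exact absurd rfl hC.ne_nil
  | @cons _ b _ h q =>
    have hq : q.IsPath := by
      refine Walk.IsPath.mk' ?_
      have := hC.2
      rwa [Walk.support_cons, List.tail_cons] at this
    have hqn : ¬ q.Nil := Walk.not_nil_of_ne (G.ne_of_adj h).symm
    have hqrn : ¬ q.reverse.Nil := by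
      rw [Walk.not_nil_iff_lt_length, Walk.length_reverse]
      exact Walk.not_nil_iff_lt_length.mp hqn
    obtain ⟨y, hadj, rwalk, hqr⟩ := Walk.not_nil_iff.mp hqrn
    have hy : s(v, y) ∈ q.edges := by
      have : s(v, y) ∈ q.reverse.edges := by rw [hqr, Walk.edges_cons]; exact List.mem_cons_self
      rwa [Walk.edges_reverse, List.mem_reverse] at this
    have hnodup : s(v, b) ∉ q.edges := by
      have := hC.isTrail.edges_nodup
      rw [Walk.edges_cons] at this
      exact (List.nodup_cons.mp this).1
    have hby : b ≠ y := by rintro rfl; exact hnodup hy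
    refine ⟨b, y, hby, ?_, ?_, ?_⟩
    · rw [Walk.edges_cons]; exact List.mem_cons_self
    · rw [Walk.edges_cons]; exact List.mem_cons_of_mem _ hy
    · intro z hz
      rw [Walk.edges_cons, List.mem_cons] at hz
      rcases hz with hz | hz
      · rcases Sym2.eq_iff.mp hz with ⟨-, rfl⟩ | ⟨hv, -⟩
        · exact Or.inl rfl
        · exact absurd hv h.ne
      · exact Or.inr (end_edge_unique hq hz hy)

private lemma cycle_pair [DecidableEq V] {r v u : V} {C : G.Walk r r} (hC : C.IsCycle)
    (hu : s(v, u) ∈ C.edges) :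
    ∃ t, t ≠ u ∧ s(v, t) ∈ C.edges ∧ ∀ z, s(v, z) ∈ C.edges → z = u ∨ z = t := by
  have hv : v ∈ C.support := C.fst_mem_support_of_mem_edges hu
  obtain ⟨x, y, hxy, hx, hy, huniq⟩ := cycle_start_pair (hC.rotate hv)
  have hmem : ∀ e, e ∈ (C.rotate v hv).edges ↔ e ∈ C.edges := fun e =>
    (C.rotate_edges v hv).mem_iff
  rw [hmem] at hx hy
  have huniq' : ∀ z, s(v, z) ∈ C.edges → z = x ∨ z = y := fun z hz =>
    huniq z ((hmem _).mpr hz)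
  rcases huniq' u hu with rfl | rfl
  · exact ⟨y, hxy.symm, hy, huniq'⟩
  · exact ⟨x, hxy, hx, fun z hz => (huniq' z hz).symm⟩

private lemma cycle_no_three [DecidableEq V] {r v z₁ z₂ z₃ : V} {C : G.Walk r r}
    (hC : C.IsCycle) (h1 : s(v, z₁) ∈ C.edges) (h2 : s(v, z₂) ∈ C.edges)
    (h3 : s(v, z₃) ∈ C.edges) (h12 : z₁ ≠ z₂) (h13 : z₁ ≠ z₃) (h23 : z₂ ≠ z₃) : False := by
  obtain ⟨t, -, -, huniq⟩ := cycle_pair hC h1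
  rcases huniq z₂ h2 with h | h
  · exact h12 h.symm
  rcases huniq z₃ h3 with h' | h'
  · exact h13 h'.symm
  · exact h23 (h.trans h'.symm)

private lemma walk_closed {S : Set V} {x y : V} (w : G.Walk x y)
    (hcl : ∀ a b, s(a, b) ∈ w.edges → a ∈ S → b ∈ S) (hx : x ∈ S) : y ∈ S := by
  induction w with
  | nil => exact hx
  | @cons a b c h q ih =>
    refine ih (fun a' b' hab ha => hcl a' b' ?_ ha) (hcl a b ?_ hx)
    · rw [Walk.edges_cons]; exact List.mem_cons_of_mem _ hab
    · rw [Walk.edges_cons]; exact List.mem_cons_self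

private lemma cycle_trap [DecidableEq V] {r a b : V} {C : G.Walk r r} (S : Set V)
    (hcl : ∀ x y, s(x, y) ∈ C.edges → x ∈ S → y ∈ S)
    (ha : a ∈ C.support) (hb : b ∈ C.support) (haS : a ∈ S) : b ∈ S := by
  have hr : r ∈ S := by
    refine walk_closed (C.takeUntil a ha).reverse ?_ haS
    intro x y hxy hx
    rw [Walk.edges_reverse, List.mem_reverse] at hxy
    exact hcl x y (C.edges_takeUntil_subset ha hxy) hx
  exact walk_closed (C.takeUntil b hb)
    (fun x y hxy hx => hcl x y (C.edges_takeUntil_subset hb hxy) hx) hr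

private lemma exists_last_edge {u w : V} {p : G.Walk u w} (hn : ¬ p.Nil) :
    ∃ z, s(w, z) ∈ p.edges := by
  have hrn : ¬ p.reverse.Nil := by
    rw [Walk.not_nil_iff_lt_length, Walk.length_reverse]
    exact Walk.not_nil_iff_lt_length.mp hn
  obtain ⟨z, h, q, hq⟩ := Walk.not_nil_iff.mp hrn
  refine ⟨z, ?_⟩
  have : s(w, z) ∈ p.reverse.edges := by rw [hq, Walk.edges_cons]; exact List.mem_cons_self
  rwa [Walk.edges_reverse, List.mem_reverse] at this

private lemma endpoints_edge_not_mem {u w : V} {p : G.Walk u w} (hp : p.IsPath)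
    (hl : 2 ≤ p.length) : s(u, w) ∉ p.edges := by
  cases p with
  | nil => simp
  | @cons _ b _ h q =>
    rw [Walk.edges_cons, List.mem_cons]
    rintro (he | he)
    · have hqn : ¬ q.Nil := by
        rw [Walk.not_nil_iff_lt_length]
        rw [Walk.length_cons] at hl
        omega
      rcases Sym2.eq_iff.mp he with ⟨-, hw⟩ | ⟨hu, -⟩
      · exact path_start_ne_end hp.of_cons hqn hw.symm
      · exact h.ne hu
    · exact ((Walk.cons_isPath_iff _ _).mp hp).2 (q.fst_mem_support_of_mem_edges he)

private lemma force_edge [DecidableEq V] {r v z₀ : V} {C : G.Walk r r} (hC : C.IsCycle)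
    (hham : ∀ x, x ∈ C.support) {s t : V} {P : G.Walk s t} (hP : P.IsPath)
    (hall : ∀ z, G.Adj v z → s(v, z) ∈ P.edges) (hz₀ : s(v, z₀) ∈ P.edges) :
    s(v, z₀) ∈ C.edges := by
  obtain ⟨x, y, hxy, hx, hy, -⟩ := cycle_start_pair (hC.rotate (hham v))
  have hmem : ∀ e, e ∈ (C.rotate v (hham v)).edges ↔ e ∈ C.edges := fun e =>
    (C.rotate_edges v (hham v)).mem_iff
  rw [hmem] at hx hy
  have hax : G.Adj v x := C.adj_of_mem_edges hx
  have hay : G.Adj v y := C.adj_of_mem_edges hy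
  by_cases h1 : z₀ = x
  · subst h1; exact hx
  by_cases h2 : z₀ = y
  · subst h2; exact hy
  exact (path_no_three h1 h2 hxy P hP hz₀ (hall x hax) (hall y hay)).elim

private lemma force_at_end [DecidableEq V] {r : V} {C : G.Walk r r} (hC : C.IsCycle)
    (hham : ∀ x, x ∈ C.support) {a b : V} {P : G.Walk a b} (hP : P.IsPath)
    (hl : 2 ≤ P.length)
    (hiso : ∀ x, x ∈ P.support → x ≠ a → x ≠ b → ∀ z, G.Adj x z → s(x, z) ∈ P.edges) :
    ∃ u, u ∈ P.support ∧ u ≠ a ∧ u ≠ b ∧ s(b, u) ∈ P.edges ∧ s(b, u) ∈ C.edges := by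
  obtain ⟨u, hu⟩ := exists_last_edge (p := P)
    (by rw [Walk.not_nil_iff_lt_length]; omega)
  have hadj : G.Adj b u := P.adj_of_mem_edges hu
  have hub : u ≠ b := hadj.ne'
  have hua : u ≠ a := by
    rintro rfl
    exact endpoints_edge_not_mem hP hl (by rwa [Sym2.eq_swap] at hu)
  have husup : u ∈ P.support := P.snd_mem_support_of_mem_edges hu
  have hforce : s(u, b) ∈ C.edges :=
    force_edge hC hham hP (hiso u husup hua hub) (by rwa [Sym2.eq_swap] at hu)
  exact ⟨u, husup, hua, hub, hu, by rwa [Sym2.eq_swap] at hforce⟩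

end ThreePCHelpers

section ThreePCCores

variable {G : SimpleGraph V}

private lemma ne_of_sym2 {x z p q : V} (h : s(x, z) = s(p, q)) (hp : x ≠ p) (hq : x ≠ q) :
    False := by
  rcases Sym2.eq_iff.mp h with ⟨h', -⟩ | ⟨h', -⟩
  exacts [hp h', hq h']

private lemma theta_core [DecidableEq V] {a b r : V} {P₁ P₂ P₃ : G.Walk a b}
    (h1 : P₁.IsPath) (h2 : P₂.IsPath) (h3 : P₃.IsPath)
    (L1 : 2 ≤ P₁.length) (L2 : 2 ≤ P₂.length) (L3 : 2 ≤ P₃.length)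
    (d12 : ∀ x, x ∈ P₁.support → x ∈ P₂.support → x = a ∨ x = b)
    (d13 : ∀ x, x ∈ P₁.support → x ∈ P₃.support → x = a ∨ x = b)
    (d23 : ∀ x, x ∈ P₂.support → x ∈ P₃.support → x = a ∨ x = b)
    (hE : ∀ e ∈ G.edgeSet, e = s(a, b) ∨ e ∈ P₁.edges ∨ e ∈ P₂.edges ∨ e ∈ P₃.edges)
    {C : G.Walk r r} (hC : C.IsCycle) (hham : ∀ x, x ∈ C.support) : False := by
  have iso : ∀ (P Q R : G.Walk a b),
      (∀ e ∈ G.edgeSet, e = s(a, b) ∨ e ∈ P.edges ∨ e ∈ Q.edges ∨ e ∈ R.edges) →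
      (∀ x, x ∈ P.support → x ∈ Q.support → x = a ∨ x = b) →
      (∀ x, x ∈ P.support → x ∈ R.support → x = a ∨ x = b) →
      ∀ x, x ∈ P.support → x ≠ a → x ≠ b → ∀ z, G.Adj x z → s(x, z) ∈ P.edges := by
    intro P Q R hE' dQ dR x hx hxa hxb z hz
    rcases hE' _ (G.mem_edgeSet.mpr hz) with he | he | he | he
    · exact (ne_of_sym2 he hxa hxb).elim
    · exact he
    · rcases dQ x hx (Q.fst_mem_support_of_mem_edges he) with rfl | rfl
      · exact absurd rfl hxa
      · exact absurd rfl hxb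
    · rcases dR x hx (R.fst_mem_support_of_mem_edges he) with rfl | rfl
      · exact absurd rfl hxa
      · exact absurd rfl hxb
  obtain ⟨u₁, hs₁, ha₁, hb₁, -, hc₁⟩ := force_at_end hC hham h1 L1 (iso P₁ P₂ P₃ hE d12 d13)
  obtain ⟨u₂, hs₂, ha₂, hb₂, -, hc₂⟩ := force_at_end hC hham h2 L2
    (iso P₂ P₁ P₃ (fun e he => by rcases hE e he with h | h | h | h <;> tauto)
      (fun x hx hx' => d12 x hx' hx) d23)
  obtain ⟨u₃, hs₃, ha₃, hb₃, -, hc₃⟩ := force_at_end hC hham h3 L3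
    (iso P₃ P₁ P₂ (fun e he => by rcases hE e he with h | h | h | h <;> tauto)
      (fun x hx hx' => d13 x hx' hx) (fun x hx hx' => d23 x hx' hx))
  have n12 : u₁ ≠ u₂ := by
    rintro rfl
    rcases d12 u₁ hs₁ hs₂ with rfl | rfl
    · exact ha₁ rfl
    · exact hb₁ rfl
  have n13 : u₁ ≠ u₃ := by
    rintro rfl
    rcases d13 u₁ hs₁ hs₃ with rfl | rfl
    · exact ha₁ rfl
    · exact hb₁ rfl
  have n23 : u₂ ≠ u₃ := by
    rintro rfl
    rcases d23 u₂ hs₂ hs₃ with rfl | rfl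
    · exact ha₂ rfl
    · exact hb₂ rfl
  exact cycle_no_three hC hc₁ hc₂ hc₃ n12 n13 n23

private lemma pyramid_core [DecidableEq V] {k₁ k₂ k₃ l r : V} {B₁ B₂ B₃ : Prop}
    {P₁ : G.Walk k₁ l} {P₂ : G.Walk k₂ l} {P₃ : G.Walk k₃ l}
    (h1 : P₁.IsPath) (h2 : P₂.IsPath) (h3 : P₃.IsPath)
    (L1 : 2 ≤ P₁.length) (L2 : 2 ≤ P₂.length) (L3 : 2 ≤ P₃.length)
    (d12 : ∀ x, x ∈ P₁.support → x ∈ P₂.support → x = l)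
    (d13 : ∀ x, x ∈ P₁.support → x ∈ P₃.support → x = l)
    (d23 : ∀ x, x ∈ P₂.support → x ∈ P₃.support → x = l)
    (hE : ∀ e ∈ G.edgeSet, e = s(k₁, k₂) ∨ e = s(k₂, k₃) ∨ e = s(k₁, k₃) ∨
      (B₁ ∧ e = s(k₁, l)) ∨ (B₂ ∧ e = s(k₂, l)) ∨ (B₃ ∧ e = s(k₃, l)) ∨
      e ∈ P₁.edges ∨ e ∈ P₂.edges ∨ e ∈ P₃.edges)
    {C : G.Walk r r} (hC : C.IsCycle) (hham : ∀ x, x ∈ C.support) : False := by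
  have iso1 : ∀ x, x ∈ P₁.support → x ≠ k₁ → x ≠ l → ∀ z, G.Adj x z → s(x, z) ∈ P₁.edges := by
    intro x hx hxk hxl z hz
    have hx2 : x ≠ k₂ := fun h => hxl (d12 x hx (h ▸ P₂.start_mem_support))
    have hx3 : x ≠ k₃ := fun h => hxl (d13 x hx (h ▸ P₃.start_mem_support))
    rcases hE _ (G.mem_edgeSet.mpr hz) with he | he | he | ⟨-, he⟩ | ⟨-, he⟩ | ⟨-, he⟩ | he | he | he
    · exact (ne_of_sym2 he hxk hx2).elim
    · exact (ne_of_sym2 he hx2 hx3).elim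
    · exact (ne_of_sym2 he hxk hx3).elim
    · exact (ne_of_sym2 he hxk hxl).elim
    · exact (ne_of_sym2 he hx2 hxl).elim
    · exact (ne_of_sym2 he hx3 hxl).elim
    · exact he
    · exact absurd (d12 x hx (P₂.fst_mem_support_of_mem_edges he)) hxl
    · exact absurd (d13 x hx (P₃.fst_mem_support_of_mem_edges he)) hxl
  have iso2 : ∀ x, x ∈ P₂.support → x ≠ k₂ → x ≠ l → ∀ z, G.Adj x z → s(x, z) ∈ P₂.edges := by
    intro x hx hxk hxl z hz
    have hx1 : x ≠ k₁ := fun h => hxl (d12 x (h ▸ P₁.start_mem_support) hx)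
    have hx3 : x ≠ k₃ := fun h => hxl (d23 x hx (h ▸ P₃.start_mem_support))
    rcases hE _ (G.mem_edgeSet.mpr hz) with he | he | he | ⟨-, he⟩ | ⟨-, he⟩ | ⟨-, he⟩ | he | he | he
    · exact (ne_of_sym2 he hx1 hxk).elim
    · exact (ne_of_sym2 he hxk hx3).elim
    · exact (ne_of_sym2 he hx1 hx3).elim
    · exact (ne_of_sym2 he hx1 hxl).elim
    · exact (ne_of_sym2 he hxk hxl).elim
    · exact (ne_of_sym2 he hx3 hxl).elim
    · exact absurd (d12 x (P₁.fst_mem_support_of_mem_edges he) hx) hxl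
    · exact he
    · exact absurd (d23 x hx (P₃.fst_mem_support_of_mem_edges he)) hxl
  have iso3 : ∀ x, x ∈ P₃.support → x ≠ k₃ → x ≠ l → ∀ z, G.Adj x z → s(x, z) ∈ P₃.edges := by
    intro x hx hxk hxl z hz
    have hx1 : x ≠ k₁ := fun h => hxl (d13 x (h ▸ P₁.start_mem_support) hx)
    have hx2 : x ≠ k₂ := fun h => hxl (d23 x (h ▸ P₂.start_mem_support) hx)
    rcases hE _ (G.mem_edgeSet.mpr hz) with he | he | he | ⟨-, he⟩ | ⟨-, he⟩ | ⟨-, he⟩ | he | he | he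
    · exact (ne_of_sym2 he hx1 hx2).elim
    · exact (ne_of_sym2 he hx2 hxk).elim
    · exact (ne_of_sym2 he hx1 hxk).elim
    · exact (ne_of_sym2 he hx1 hxl).elim
    · exact (ne_of_sym2 he hx2 hxl).elim
    · exact (ne_of_sym2 he hxk hxl).elim
    · exact absurd (d13 x (P₁.fst_mem_support_of_mem_edges he) hx) hxl
    · exact absurd (d23 x (P₂.fst_mem_support_of_mem_edges he) hx) hxl
    · exact he
  obtain ⟨u₁, hs₁, ha₁, hb₁, -, hc₁⟩ := force_at_end hC hham h1 L1 iso1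
  obtain ⟨u₂, hs₂, ha₂, hb₂, -, hc₂⟩ := force_at_end hC hham h2 L2 iso2
  obtain ⟨u₃, hs₃, ha₃, hb₃, -, hc₃⟩ := force_at_end hC hham h3 L3 iso3
  have n12 : u₁ ≠ u₂ := by rintro rfl; exact hb₁ (d12 u₁ hs₁ hs₂)
  have n13 : u₁ ≠ u₃ := by rintro rfl; exact hb₁ (d13 u₁ hs₁ hs₃)
  have n23 : u₂ ≠ u₃ := by rintro rfl; exact hb₂ (d23 u₂ hs₂ hs₃)
  exact cycle_no_three hC hc₁ hc₂ hc₃ n12 n13 n23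

end ThreePCCores

private lemma prism_core [DecidableEq V] {G : SimpleGraph V} {k₁ k₂ k₃ l₁ l₂ l₃ r : V}
    {B₁ B₂ B₃ : Prop}
    {P₁ : G.Walk k₁ l₁} {P₂ : G.Walk k₂ l₂} {P₃ : G.Walk k₃ l₃}
    (ak12 : G.Adj k₁ k₂) (ak23 : G.Adj k₂ k₃) (ak13 : G.Adj k₁ k₃)
    (h1 : P₁.IsPath) (h2 : P₂.IsPath) (h3 : P₃.IsPath)
    (L1 : 2 ≤ P₁.length) (L2 : 2 ≤ P₂.length) (L3 : 2 ≤ P₃.length)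
    (d12 : ∀ x, x ∈ P₁.support → x ∉ P₂.support)
    (d13 : ∀ x, x ∈ P₁.support → x ∉ P₃.support)
    (d23 : ∀ x, x ∈ P₂.support → x ∉ P₃.support)
    (hE : ∀ e ∈ G.edgeSet, e = s(k₁, k₂) ∨ e = s(k₂, k₃) ∨ e = s(k₁, k₃) ∨
      e = s(l₁, l₂) ∨ e = s(l₂, l₃) ∨ e = s(l₁, l₃) ∨
      (B₁ ∧ e = s(k₁, l₁)) ∨ (B₂ ∧ e = s(k₂, l₂)) ∨ (B₃ ∧ e = s(k₃, l₃)) ∨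
      e ∈ P₁.edges ∨ e ∈ P₂.edges ∨ e ∈ P₃.edges)
    {C : G.Walk r r} (hC : C.IsCycle) (hham : ∀ x, x ∈ C.support) : False := by
  -- basic distinctness facts
  have hn1 : ¬ P₁.Nil := by rw [Walk.not_nil_iff_lt_length]; omega
  have hn2 : ¬ P₂.Nil := by rw [Walk.not_nil_iff_lt_length]; omega
  have hn3 : ¬ P₃.Nil := by rw [Walk.not_nil_iff_lt_length]; omega
  have k1l1 : k₁ ≠ l₁ := path_start_ne_end h1 hn1
  have k2l2 : k₂ ≠ l₂ := path_start_ne_end h2 hn2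
  have k3l3 : k₃ ≠ l₃ := path_start_ne_end h3 hn3
  have k1l2 : k₁ ≠ l₂ := fun h => d12 k₁ P₁.start_mem_support (h ▸ P₂.end_mem_support)
  have k1l3 : k₁ ≠ l₃ := fun h => d13 k₁ P₁.start_mem_support (h ▸ P₃.end_mem_support)
  have k2l1 : k₂ ≠ l₁ := fun h => d12 l₁ P₁.end_mem_support (h ▸ P₂.start_mem_support)
  have k2l3 : k₂ ≠ l₃ := fun h => d23 k₂ P₂.start_mem_support (h ▸ P₃.end_mem_support)
  have k3l1 : k₃ ≠ l₁ := fun h => d13 l₁ P₁.end_mem_support (h ▸ P₃.start_mem_support)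
  have k3l2 : k₃ ≠ l₂ := fun h => d23 l₂ P₂.end_mem_support (h ▸ P₃.start_mem_support)
  -- isolation at internal vertices of each path
  have iso1 : ∀ x, x ∈ P₁.support → x ≠ k₁ → x ≠ l₁ → ∀ z, G.Adj x z → s(x, z) ∈ P₁.edges := by
    intro x hx hxk hxl z hz
    have hk2 : x ≠ k₂ := fun h => d12 x hx (h ▸ P₂.start_mem_support)
    have hk3 : x ≠ k₃ := fun h => d13 x hx (h ▸ P₃.start_mem_support)
    have hl2 : x ≠ l₂ := fun h => d12 x hx (h ▸ P₂.end_mem_support)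
    have hl3 : x ≠ l₃ := fun h => d13 x hx (h ▸ P₃.end_mem_support)
    rcases hE _ (G.mem_edgeSet.mpr hz) with
      he | he | he | he | he | he | ⟨-, he⟩ | ⟨-, he⟩ | ⟨-, he⟩ | he | he | he
    · exact (ne_of_sym2 he hxk hk2).elim
    · exact (ne_of_sym2 he hk2 hk3).elim
    · exact (ne_of_sym2 he hxk hk3).elim
    · exact (ne_of_sym2 he hxl hl2).elim
    · exact (ne_of_sym2 he hl2 hl3).elim
    · exact (ne_of_sym2 he hxl hl3).elim
    · exact (ne_of_sym2 he hxk hxl).elim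
    · exact (ne_of_sym2 he hk2 hl2).elim
    · exact (ne_of_sym2 he hk3 hl3).elim
    · exact he
    · exact absurd (P₂.fst_mem_support_of_mem_edges he) (d12 x hx)
    · exact absurd (P₃.fst_mem_support_of_mem_edges he) (d13 x hx)
  have iso2 : ∀ x, x ∈ P₂.support → x ≠ k₂ → x ≠ l₂ → ∀ z, G.Adj x z → s(x, z) ∈ P₂.edges := by
    intro x hx hxk hxl z hz
    have hk1 : x ≠ k₁ := fun h => d12 x (h ▸ P₁.start_mem_support) hx
    have hk3 : x ≠ k₃ := fun h => d23 x hx (h ▸ P₃.start_mem_support)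
    have hl1 : x ≠ l₁ := fun h => d12 x (h ▸ P₁.end_mem_support) hx
    have hl3 : x ≠ l₃ := fun h => d23 x hx (h ▸ P₃.end_mem_support)
    rcases hE _ (G.mem_edgeSet.mpr hz) with
      he | he | he | he | he | he | ⟨-, he⟩ | ⟨-, he⟩ | ⟨-, he⟩ | he | he | he
    · exact (ne_of_sym2 he hk1 hxk).elim
    · exact (ne_of_sym2 he hxk hk3).elim
    · exact (ne_of_sym2 he hk1 hk3).elim
    · exact (ne_of_sym2 he hl1 hxl).elim
    · exact (ne_of_sym2 he hxl hl3).elim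
    · exact (ne_of_sym2 he hl1 hl3).elim
    · exact (ne_of_sym2 he hk1 hl1).elim
    · exact (ne_of_sym2 he hxk hxl).elim
    · exact (ne_of_sym2 he hk3 hl3).elim
    · exact absurd hx (d12 x (P₁.fst_mem_support_of_mem_edges he))
    · exact he
    · exact absurd (P₃.fst_mem_support_of_mem_edges he) (d23 x hx)
  have iso3 : ∀ x, x ∈ P₃.support → x ≠ k₃ → x ≠ l₃ → ∀ z, G.Adj x z → s(x, z) ∈ P₃.edges := by
    intro x hx hxk hxl z hz
    have hk1 : x ≠ k₁ := fun h => d13 x (h ▸ P₁.start_mem_support) hx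
    have hk2 : x ≠ k₂ := fun h => d23 x (h ▸ P₂.start_mem_support) hx
    have hl1 : x ≠ l₁ := fun h => d13 x (h ▸ P₁.end_mem_support) hx
    have hl2 : x ≠ l₂ := fun h => d23 x (h ▸ P₂.end_mem_support) hx
    rcases hE _ (G.mem_edgeSet.mpr hz) with
      he | he | he | he | he | he | ⟨-, he⟩ | ⟨-, he⟩ | ⟨-, he⟩ | he | he | he
    · exact (ne_of_sym2 he hk1 hk2).elim
    · exact (ne_of_sym2 he hk2 hxk).elim
    · exact (ne_of_sym2 he hk1 hxk).elim
    · exact (ne_of_sym2 he hl1 hl2).elim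
    · exact (ne_of_sym2 he hl2 hxl).elim
    · exact (ne_of_sym2 he hl1 hxl).elim
    · exact (ne_of_sym2 he hk1 hl1).elim
    · exact (ne_of_sym2 he hk2 hl2).elim
    · exact (ne_of_sym2 he hxk hxl).elim
    · exact absurd hx (d13 x (P₁.fst_mem_support_of_mem_edges he))
    · exact absurd hx (d23 x (P₂.fst_mem_support_of_mem_edges he))
    · exact he
  -- forced edges at the l-side
  obtain ⟨w₁, hw₁s, hw₁k, hw₁l, hw₁P, hw₁C⟩ := force_at_end hC hham h1 L1 iso1
  obtain ⟨w₂, hw₂s, hw₂k, hw₂l, hw₂P, hw₂C⟩ := force_at_end hC hham h2 L2 iso2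
  obtain ⟨w₃, hw₃s, hw₃k, hw₃l, hw₃P, hw₃C⟩ := force_at_end hC hham h3 L3 iso3
  -- forced edges at the k-side, via the reversed paths
  have isoR : ∀ {k l : V} (P : G.Walk k l),
      (∀ x, x ∈ P.support → x ≠ k → x ≠ l → ∀ z, G.Adj x z → s(x, z) ∈ P.edges) →
      ∀ x, x ∈ P.reverse.support → x ≠ l → x ≠ k → ∀ z, G.Adj x z →
        s(x, z) ∈ P.reverse.edges := by
    intro k l P hiso x hx hxl hxk z hz
    rw [Walk.support_reverse, List.mem_reverse] at hx
    rw [Walk.edges_reverse, List.mem_reverse]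
    exact hiso x hx hxk hxl z hz
  obtain ⟨u₁, hu₁s, hu₁l, hu₁k, hu₁P, hu₁C⟩ := force_at_end hC hham h1.reverse
    (by rw [Walk.length_reverse]; exact L1) (isoR P₁ iso1)
  obtain ⟨u₂, hu₂s, hu₂l, hu₂k, hu₂P, hu₂C⟩ := force_at_end hC hham h2.reverse
    (by rw [Walk.length_reverse]; exact L2) (isoR P₂ iso2)
  obtain ⟨u₃, hu₃s, hu₃l, hu₃k, hu₃P, hu₃C⟩ := force_at_end hC hham h3.reverse
    (by rw [Walk.length_reverse]; exact L3) (isoR P₃ iso3)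
  rw [Walk.support_reverse, List.mem_reverse] at hu₁s hu₂s hu₃s
  rw [Walk.edges_reverse, List.mem_reverse] at hu₁P hu₂P hu₃P
  -- no chord kᵢlᵢ can be a cycle edge
  have claimA : ∀ {k l u w : V} {P : G.Walk k l} (hP : P.IsPath)
      (hiso : ∀ x, x ∈ P.support → x ≠ k → x ≠ l → ∀ z, G.Adj x z → s(x, z) ∈ P.edges)
      (hus : u ∈ P.support) (hul : u ≠ l) (huC : s(k, u) ∈ C.edges)
      (hws : w ∈ P.support) (hwk : w ≠ k) (hwC : s(l, w) ∈ C.edges)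
      {o : V} (hoP : o ∉ P.support), s(k, l) ∉ C.edges := by
    intro k l u w P hP hiso hus hul huC hws hwk hwC o hoP hkl
    have hclosed : ∀ x y, s(x, y) ∈ C.edges → x ∈ {v | v ∈ P.support} →
        y ∈ {v | v ∈ P.support} := by
      intro x y hxy hx
      simp only [Set.mem_setOf_eq] at hx ⊢
      by_cases hxk : x = k
      · subst hxk
        obtain ⟨t, htne, htC, huniq⟩ := cycle_pair hC huC
        have htl : t = l := by
          rcases huniq l hkl with h | h
          · exact absurd h.symm hul
          · exact h.symm
        rcases huniq y hxy with rfl | rfl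
        · exact hus
        · rw [htl]; exact P.end_mem_support
      by_cases hxl : x = l
      · subst hxl
        obtain ⟨t, htne, htC, huniq⟩ := cycle_pair hC hwC
        have htk : t = k := by
          rcases huniq k (by rwa [Sym2.eq_swap] at hkl) with h | h
          · exact absurd h.symm hwk
          · exact h.symm
        rcases huniq y hxy with rfl | rfl
        · exact hws
        · rw [htk]; exact P.start_mem_support
      · exact P.snd_mem_support_of_mem_edges (hiso x hx hxk hxl y (C.adj_of_mem_edges hxy))
    exact hoP (cycle_trap {v | v ∈ P.support} hclosed (hham k) (hham o) P.start_mem_support)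
  have cA1 : s(k₁, l₁) ∉ C.edges :=
    claimA h1 iso1 hu₁s hu₁l hu₁C hw₁s hw₁k hw₁C
      (fun h => d12 k₂ h P₂.start_mem_support)
  have cA2 : s(k₂, l₂) ∉ C.edges :=
    claimA h2 iso2 hu₂s hu₂l hu₂C hw₂s hw₂k hw₂C
      (fun h => d12 k₁ P₁.start_mem_support h)
  have cA3 : s(k₃, l₃) ∉ C.edges :=
    claimA h3 iso3 hu₃s hu₃l hu₃C hw₃s hw₃k hw₃C
      (fun h => d13 k₁ P₁.start_mem_support h)
  -- the second cycle-neighbor of each kᵢ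
  obtain ⟨t₁, ht₁u, ht₁C, huniq₁⟩ := cycle_pair hC hu₁C
  obtain ⟨t₂, ht₂u, ht₂C, huniq₂⟩ := cycle_pair hC hu₂C
  obtain ⟨t₃, ht₃u, ht₃C, huniq₃⟩ := cycle_pair hC hu₃C
  have ht1 : t₁ = k₂ ∨ t₁ = k₃ := by
    rcases hE _ (C.edges_subset_edgeSet ht₁C) with
      he | he | he | he | he | he | ⟨-, he⟩ | ⟨-, he⟩ | ⟨-, he⟩ | he | he | he
    · rcases Sym2.eq_iff.mp he with ⟨-, h⟩ | ⟨h, -⟩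
      · exact Or.inl h
      · exact absurd h ak12.ne
    · exact (ne_of_sym2 he ak12.ne ak13.ne).elim
    · rcases Sym2.eq_iff.mp he with ⟨-, h⟩ | ⟨h, -⟩
      · exact Or.inr h
      · exact absurd h ak13.ne
    · exact (ne_of_sym2 he k1l1 k1l2).elim
    · exact (ne_of_sym2 he k1l2 k1l3).elim
    · exact (ne_of_sym2 he k1l1 k1l3).elim
    · rcases Sym2.eq_iff.mp he with ⟨-, h⟩ | ⟨h, -⟩
      · exact absurd (h ▸ ht₁C) cA1
      · exact absurd h k1l1
    · exact (ne_of_sym2 he ak12.ne k1l2).elim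
    · exact (ne_of_sym2 he ak13.ne k1l3).elim
    · exact absurd (start_edge_unique h1 he hu₁P) ht₁u
    · exact absurd (P₂.fst_mem_support_of_mem_edges he) (d12 k₁ P₁.start_mem_support)
    · exact absurd (P₃.fst_mem_support_of_mem_edges he) (d13 k₁ P₁.start_mem_support)
  have ht2 : t₂ = k₁ ∨ t₂ = k₃ := by
    rcases hE _ (C.edges_subset_edgeSet ht₂C) with
      he | he | he | he | he | he | ⟨-, he⟩ | ⟨-, he⟩ | ⟨-, he⟩ | he | he | he
    · rcases Sym2.eq_iff.mp he with ⟨h, -⟩ | ⟨-, h⟩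
      · exact absurd h ak12.ne'
      · exact Or.inl h
    · rcases Sym2.eq_iff.mp he with ⟨-, h⟩ | ⟨h, -⟩
      · exact Or.inr h
      · exact absurd h ak23.ne
    · exact (ne_of_sym2 he ak12.ne' ak23.ne).elim
    · exact (ne_of_sym2 he k2l1 k2l2).elim
    · exact (ne_of_sym2 he k2l2 k2l3).elim
    · exact (ne_of_sym2 he k2l1 k2l3).elim
    · exact (ne_of_sym2 he ak12.ne' k2l1).elim
    · rcases Sym2.eq_iff.mp he with ⟨-, h⟩ | ⟨h, -⟩
      · exact absurd (h ▸ ht₂C) cA2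
      · exact absurd h k2l2
    · exact (ne_of_sym2 he ak23.ne k2l3).elim
    · exact absurd (P₁.fst_mem_support_of_mem_edges he)
        (fun hh => d12 k₂ hh P₂.start_mem_support)
    · exact absurd (start_edge_unique h2 he hu₂P) ht₂u
    · exact absurd (P₃.fst_mem_support_of_mem_edges he) (d23 k₂ P₂.start_mem_support)
  have ht3 : t₃ = k₁ ∨ t₃ = k₂ := by
    rcases hE _ (C.edges_subset_edgeSet ht₃C) with
      he | he | he | he | he | he | ⟨-, he⟩ | ⟨-, he⟩ | ⟨-, he⟩ | he | he | he
    · exact (ne_of_sym2 he ak13.ne' ak23.ne').elim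
    · rcases Sym2.eq_iff.mp he with ⟨h, -⟩ | ⟨-, h⟩
      · exact absurd h ak23.ne'
      · exact Or.inr h
    · rcases Sym2.eq_iff.mp he with ⟨h, -⟩ | ⟨-, h⟩
      · exact absurd h ak13.ne'
      · exact Or.inl h
    · exact (ne_of_sym2 he k3l1 k3l2).elim
    · exact (ne_of_sym2 he k3l2 k3l3).elim
    · exact (ne_of_sym2 he k3l1 k3l3).elim
    · exact (ne_of_sym2 he ak13.ne' k3l1).elim
    · exact (ne_of_sym2 he ak23.ne' k3l2).elim
    · rcases Sym2.eq_iff.mp he with ⟨-, h⟩ | ⟨h, -⟩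
      · exact absurd (h ▸ ht₃C) cA3
      · exact absurd h k3l3
    · exact absurd (P₁.fst_mem_support_of_mem_edges he)
        (fun hh => d13 k₃ hh P₃.start_mem_support)
    · exact absurd (P₂.fst_mem_support_of_mem_edges he)
        (fun hh => d23 k₃ hh P₃.start_mem_support)
    · exact absurd (start_edge_unique h3 he hu₃P) ht₃u
  -- final matching contradiction on the triangle k₁k₂k₃
  have hk1u2 : k₁ ≠ u₂ := fun h => d12 k₁ P₁.start_mem_support (h ▸ hu₂s)
  have hk1u3 : k₁ ≠ u₃ := fun h => d13 k₁ P₁.start_mem_support (h ▸ hu₃s)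
  have hk2u1 : k₂ ≠ u₁ := fun h => d12 u₁ hu₁s (h ▸ P₂.start_mem_support)
  have hk2u3 : k₂ ≠ u₃ := fun h => d23 k₂ P₂.start_mem_support (h ▸ hu₃s)
  have hk3u1 : k₃ ≠ u₁ := fun h => d13 u₁ hu₁s (h ▸ P₃.start_mem_support)
  have hk3u2 : k₃ ≠ u₂ := fun h => d23 u₂ hu₂s (h ▸ P₃.start_mem_support)
  rcases ht1 with rfl | rfl
  · -- t₁ = k₂, so s(k₁,k₂) ∈ C; hence t₂ = k₁
    have ht2' : t₂ = k₁ := by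
      rcases huniq₂ k₁ (by rwa [Sym2.eq_swap] at ht₁C) with h | h
      · exact absurd h hk1u2
      · exact h.symm
    rcases ht3 with rfl | rfl
    · rcases huniq₁ k₃ (by rwa [Sym2.eq_swap] at ht₃C) with h | h
      · exact hk3u1 h
      · exact ak23.ne' h
    · rcases huniq₂ k₃ (by rwa [Sym2.eq_swap] at ht₃C) with h | h
      · exact hk3u2 h
      · exact ak13.ne' (h.trans ht2')
  · -- t₁ = k₃, so s(k₁,k₃) ∈ C; hence t₃ = k₁
    have ht3' : t₃ = k₁ := by
      rcases huniq₃ k₁ (by rwa [Sym2.eq_swap] at ht₁C) with h | h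
      · exact absurd h hk1u3
      · exact h.symm
    rcases ht2 with rfl | rfl
    · rcases huniq₁ k₂ (by rwa [Sym2.eq_swap] at ht₂C) with h | h
      · exact hk2u1 h
      · exact ak23.ne h
    · rcases huniq₃ k₂ (by rwa [Sym2.eq_swap] at ht₂C) with h | h
      · exact hk2u3 h
      · exact ak12.ne' (h.trans ht3')

/-- No 3-path-configuration has a Hamiltonian cycle. -/
theorem threePathConfig_not_hamiltonian {V : Type u} [Fintype V] (G : SimpleGraph V)
    (hG : IsThreePathConfig G) : ¬ IsHamiltonianGraph G := by
  classical
  rintro ⟨rt, C, hC, hham⟩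
  rcases hG with h | h | h | h | h | h
  · obtain ⟨k₁, k₂, k₃, l₁, l₂, l₃, P₁, P₂, P₃, ak12, ak23, ak13, al12, al23, al13,
      h1, h2, h3, L1, L2, L3, d12, d13, d23, -, hax⟩ := h
    refine prism_core (B₁ := False) (B₂ := False) (B₃ := False) ak12 ak23 ak13 h1 h2 h3
      L1 L2 L3 d12 d13 d23 (fun e he => ?_) hC hham
    rcases hax e he with h | h | h | h | h | h | h | h | h
    · exact Or.inl h
    · exact Or.inr (Or.inl h)
    · exact Or.inr (Or.inr (Or.inl h))
    · exact Or.inr (Or.inr (Or.inr (Or.inl h)))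
    · exact Or.inr (Or.inr (Or.inr (Or.inr (Or.inl h))))
    · exact Or.inr (Or.inr (Or.inr (Or.inr (Or.inr (Or.inl h)))))
    · exact Or.inr (Or.inr (Or.inr (Or.inr (Or.inr (Or.inr (Or.inr (Or.inr (Or.inr
        (Or.inl h)))))))))
    · exact Or.inr (Or.inr (Or.inr (Or.inr (Or.inr (Or.inr (Or.inr (Or.inr (Or.inr
        (Or.inr (Or.inl h))))))))))
    · exact Or.inr (Or.inr (Or.inr (Or.inr (Or.inr (Or.inr (Or.inr (Or.inr (Or.inr
        (Or.inr (Or.inr h))))))))))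
  · obtain ⟨k₁, k₂, k₃, l, P₁, P₂, P₃, ak12, ak23, ak13, h1, h2, h3, L1, L2, L3,
      d12, d13, d23, -, hax⟩ := h
    refine pyramid_core (B₁ := False) (B₂ := False) (B₃ := False) h1 h2 h3 L1 L2 L3
      d12 d13 d23 (fun e he => ?_) hC hham
    rcases hax e he with h | h | h | h | h | h
    · exact Or.inl h
    · exact Or.inr (Or.inl h)
    · exact Or.inr (Or.inr (Or.inl h))
    · exact Or.inr (Or.inr (Or.inr (Or.inr (Or.inr (Or.inr (Or.inl h))))))
    · exact Or.inr (Or.inr (Or.inr (Or.inr (Or.inr (Or.inr (Or.inr (Or.inl h)))))))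
    · exact Or.inr (Or.inr (Or.inr (Or.inr (Or.inr (Or.inr (Or.inr (Or.inr h)))))))
  · obtain ⟨a, b, P₁, P₂, P₃, hab, h1, h2, h3, L1, L2, L3, d12, d13, d23, -, hax⟩ := h
    exact theta_core h1 h2 h3 L1 L2 L3 d12 d13 d23 (fun e he => Or.inr (hax e he)) hC hham
  · obtain ⟨k₁, k₂, k₃, l₁, l₂, l₃, P₁, P₂, P₃, b₁, b₂, b₃, -, -, -, -, ak12, ak23, ak13,
      al12, al23, al13, h1, h2, h3, L1, L2, L3, d12, d13, d23, -, hax⟩ := h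
    exact prism_core ak12 ak23 ak13 h1 h2 h3 L1 L2 L3 d12 d13 d23 hax hC hham
  · obtain ⟨k₁, k₂, k₃, l, P₁, P₂, P₃, b₁, b₂, b₃, -, -, -, -, ak12, ak23, ak13,
      h1, h2, h3, L1, L2, L3, d12, d13, d23, -, hax⟩ := h
    exact pyramid_core h1 h2 h3 L1 L2 L3 d12 d13 d23 hax hC hham
  · obtain ⟨a, b, P₁, P₂, P₃, hab, hadj, h1, h2, h3, L1, L2, L3, d12, d13, d23, -, hax⟩ := h
    exact theta_core h1 h2 h3 L1 L2 L3 d12 d13 d23 hax hC hham
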